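/- For the symmetric 3-level quantization of the 2-PAM Gaussian channel with inputs ±1, uniform input distribution, gain g > 0, threshold b > 0, and soft bit α = (Q(b-g) - Q(b+g))/(Q(b-g) + Q(b+g)), the stationarity condition (2-3) for the mutual-information-optimal threshold is equivalent to cosh(bg)·ln(1-α²) + sinh(bg)·ln((1+α)/(1-α)) = 0. -/
import Mathlib


open MeasureTheory Real

/-- The Gaussian Q-function (standard normal tail probability). -/
noncomputable def gaussQ (x : ℝ) : ℝ :=
  ∫ k in Set.Ioi x, (1 / Real.sqrt (2 * π)) * Real.exp (-k ^ 2 / 2)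

lemma gaussQ_pos (x : ℝ) : 0 < gaussQ x := by
  unfold gaussQ
  have hint : IntegrableOn (fun k : ℝ => (1 / Real.sqrt (2 * π)) * Real.exp (-k ^ 2 / 2))
      (Set.Ioi x) := by
    apply Integrable.integrableOn
    have : Integrable (fun k : ℝ => Real.exp (-(1/2) * k ^ 2)) := by
      simpa using integrable_exp_neg_mul_sq (by norm_num : (0:ℝ) < 1/2)
    have := this.const_mul (1 / Real.sqrt (2 * π))
    convert this using 2 with k
    ring_nf
  rw [MeasureTheory.setIntegral_pos_iff_support_of_nonneg_ae]
  · have hsup : Function.support (fun k : ℝ => (1 / Real.sqrt (2 * π)) * Real.exp (-k ^ 2 / 2))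
        = Set.univ := by
      ext k
      simp [Function.mem_support]
      positivity
    rw [hsup, Set.univ_inter]
    simp [Real.volume_Ioi]
  · filter_upwards with k
    positivity
  · exact hint

theorem stmt_15 (b g : ℝ) (hb : 0 < b) (hg : 0 < g)
    (α : ℝ)
    (hα : α = (gaussQ (b - g) - gaussQ (b + g)) / (gaussQ (b - g) + gaussQ (b + g)))
    (hα0 : 0 < α) (hα1 : α < 1) :
    (2 * b * g =
        Real.log
          (-(Real.log (2 * gaussQ (b + g) / (gaussQ (b + g) + gaussQ (b - g)))) /
            Real.log (2 * gaussQ (b - g) / (gaussQ (b + g) + gaussQ (b - g))))) ↔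
      Real.cosh (b * g) * Real.log (1 - α ^ 2) +
          Real.sinh (b * g) * Real.log ((1 + α) / (1 - α)) = 0 := by
  have hp := gaussQ_pos (b + g)
  have hm := gaussQ_pos (b - g)
  set Qp := gaussQ (b + g)
  set Qm := gaussQ (b - g)
  have hS : Qp + Qm ≠ 0 := by positivity
  have h1 : 2 * Qp / (Qp + Qm) = 1 - α := by
    rw [hα]; field_simp; ring
  have h2 : 2 * Qm / (Qp + Qm) = 1 + α := by
    rw [hα]; field_simp; ring
  rw [h1, h2]
  set t := b * g with ht
  have ht0 : 0 < t := mul_pos hb hg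
  have h1a : (0:ℝ) < 1 - α := by linarith
  have h1b : (0:ℝ) < 1 + α := by linarith
  have hL1 : 0 < Real.log (1 + α) := Real.log_pos (by linarith)
  have hL2 : Real.log (1 - α) < 0 := Real.log_neg h1a (by linarith)
  set L1 := Real.log (1 + α)
  set L2 := Real.log (1 - α)
  have hsq : 1 - α ^ 2 = (1 + α) * (1 - α) := by ring
  have hrhs : Real.cosh t * Real.log (1 - α ^ 2) + Real.sinh t * Real.log ((1 + α) / (1 - α))
      = Real.exp t * L1 + Real.exp (-t) * L2 := by
    rw [hsq, Real.log_mul (by positivity) (by positivity),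
      Real.log_div (by positivity) (by positivity), Real.cosh_eq, Real.sinh_eq]
    ring
  rw [hrhs]
  have key : Real.exp t * L1 + Real.exp (-t) * L2 = 0 ↔
      Real.exp (2 * t) = -L2 / L1 := by
    rw [eq_div_iff (ne_of_gt hL1)]
    constructor
    · intro h
      have : Real.exp t * (Real.exp t * L1 + Real.exp (-t) * L2) = 0 := by rw [h]; ring
      have h2t : Real.exp (2*t) = Real.exp t * Real.exp t := by
        rw [two_mul, Real.exp_add]
      rw [h2t]
      have he : Real.exp t * Real.exp (-t) = 1 := by
        rw [← Real.exp_add]; simp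
      nlinarith [Real.exp_pos t]
    · intro h
      have h2t : Real.exp (2*t) = Real.exp t * Real.exp t := by
        rw [two_mul, Real.exp_add]
      have he : Real.exp t * Real.exp (-t) = 1 := by
        rw [← Real.exp_add]; simp
      nlinarith [Real.exp_pos t]
  rw [key]
  have hr : 0 < -L2 / L1 := div_pos (by linarith) hL1
  constructor
  · intro h
    have := congrArg Real.exp h
    rw [Real.exp_log hr] at this
    show Real.exp (2 * (b * g)) = -L2 / L1
    rwa [← mul_assoc]
  · intro h
    have := congrArg Real.log h
    rw [Real.log_exp] at this
    rw [mul_assoc]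
    exact this
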